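/- Let (f_n)_{n≥1} be a sequence of holomorphic self-maps of the unit disk 𝔻 whose forward iterates F_n := f_n ∘ ⋯ ∘ f_1 converge locally uniformly on 𝔻 to a nonconstant holomorphic self-map F of 𝔻, and let c ∈ 𝔻. Then ∏_{w ∈ 𝔻, w ≠ 0} |w|^{ord_w(F − F(c))} = lim_{n→∞} ∏_{w ∈ 𝔻, w ≠ 0} |w|^{ord_w(F_n − F_n(c))}, where all the infinite products converge. -/

import Mathlib

open Filter Metric Set

noncomputable section

/-- The open unit disk in the complex plane. -/
def unitDisk : Set ℂ := Metric.ball (0 : ℂ) 1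

/-- A holomorphic self-map of the unit disk. -/
def IsHolSelfMap (f : ℂ → ℂ) : Prop :=
  DifferentiableOn ℂ f unitDisk ∧ Set.MapsTo f unitDisk unitDisk

/-- The order of vanishing of `g` at `w`: the least `k` such that the `k`-th derivative of
`g` at `w` is nonzero (`⊤` if all derivatives vanish). -/
def ordAt (g : ℂ → ℂ) (w : ℂ) : ℕ∞ :=
  sInf {n : ℕ∞ | ∃ k : ℕ, (k : ℕ∞) = n ∧ iteratedDeriv k g w ≠ 0}

open Topology Function

/-!
Writing `F (n + 1) = f (n + 1) ∘ F n`, a zero of order `k` of `F n - F n c` at `w` is a zero of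
order at least `k` of `F (n + 1) - F (n + 1) c`, so the exponents are nondecreasing in `n`. Since
all derivatives converge locally uniformly, they are bounded by the order of `Flim - Flim c`, and
they eventually reach it by a Hurwitz-type argument: a coincidence `F n z = F n c` persists to the
limit, so near `w` the functions `F n - F n c` have no zeros besides `w`, and the minimum and
maximum modulus principles on a small circle around `w`, applied to the quotients by
`(z - w) ^ k`, rule out a jump of the order in the limit. Every factor lies in `[0, 1]`, so each
product is the infimum of its finite partial products; exponents that are dominated by the limit
exponents and eventually equal to them then give convergence of the products.
-/

theorem natCast_le_ordAt_iff {g : ℂ → ℂ} {w : ℂ} {k : ℕ} :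
    (k : ℕ∞) ≤ ordAt g w ↔ ∀ j < k, iteratedDeriv j g w = 0 := by
  simp only [ordAt, le_sInf_iff, Set.mem_ofPred_eq, forall_exists_index, and_imp]
  refine ⟨fun h j hj => by_contra fun hne => ?_, fun h _ j hj hne => ?_⟩
  · exact absurd (h j j rfl hne) (by exact_mod_cast hj.not_ge)
  · subst hj; exact_mod_cast le_of_not_gt fun hjk => hne (h j hjk)

theorem ordAt_eq_analyticOrderAt {g : ℂ → ℂ} {w : ℂ} (hg : AnalyticAt ℂ g w) :
    ordAt g w = analyticOrderAt g w :=
  ENat.eq_of_forall_natCast_le_iff fun k => by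
    rw [natCast_le_ordAt_iff, natCast_le_analyticOrderAt_iff_iteratedDeriv_eq_zero hg]

section Composition

variable {𝕜 E : Type*} [NontriviallyNormedField 𝕜] [NormedAddCommGroup E] [NormedSpace 𝕜 E]

theorem analyticOrderAt_sub_le_comp_sub {φ : 𝕜 → E} {u : 𝕜 → 𝕜} {w a : 𝕜}
    (hφ : AnalyticAt 𝕜 φ (u w)) (hu : AnalyticAt 𝕜 u w) :
    analyticOrderAt (u · - a) w ≤ analyticOrderAt (fun z => φ (u z) - φ a) w := by
  by_cases hwa : u w = a
  · subst hwa
    have hφ' : AnalyticAt 𝕜 (φ · - φ (u w)) (u w) := hφ.sub analyticAt_const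
    have hone : 1 ≤ analyticOrderAt (φ · - φ (u w)) (u w) :=
      Order.one_le_iff_ne_zero.2 (hφ'.analyticOrderAt_ne_zero.2 (sub_self _))
    calc analyticOrderAt (u · - u w) w
        ≤ analyticOrderAt (φ · - φ (u w)) (u w) * analyticOrderAt (u · - u w) w :=
          le_mul_of_one_le_left' hone
      _ = analyticOrderAt (fun z => φ (u z) - φ (u w)) w := (hφ'.analyticOrderAt_comp hu).symm
  · rw [analyticOrderAt_eq_zero (f := (u · - a)) |>.2 (.inr (sub_ne_zero.2 hwa))]
    exact zero_le

theorem AnalyticAt.eventually_ne_zero_of_analyticOrderAt_ne_top {f : 𝕜 → E} {w : 𝕜}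
    (hf : AnalyticAt 𝕜 f w) (h : analyticOrderAt f w ≠ ⊤) : ∀ᶠ z in 𝓝[≠] w, f z ≠ 0 :=
  hf.eventually_eq_zero_or_eventually_ne_zero.resolve_left fun h' =>
    h (analyticOrderAt_eq_top.2 h')

end Composition

section IterateDSlope

variable {f : ℂ → ℂ} {U : Set ℂ} {w : ℂ}

theorem DifferentiableOn.iterate_dslope (hf : DifferentiableOn ℂ f U) (hU : U ∈ 𝓝 w) (k : ℕ) :
    DifferentiableOn ℂ ((swap dslope w)^[k] f) U := by
  induction k with
  | zero => exact hf
  | succ k ih => rw [iterate_succ_apply']; exact (Complex.differentiableOn_dslope hU).2 ih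

theorem analyticOrderAt_eq_add_iterate_dslope (hf : DifferentiableOn ℂ f U) (hU : U ∈ 𝓝 w)
    {k : ℕ} (hk : k ≤ analyticOrderAt f w) :
    analyticOrderAt f w = k + analyticOrderAt ((swap dslope w)^[k] f) w := by
  induction k with
  | zero => simp
  | succ k ih =>
    have ih := ih (le_trans (by simp) hk)
    set h := (swap dslope w)^[k] f
    have hd_an : AnalyticAt ℂ (dslope h w) w := by
      simpa only [iterate_succ_apply'] using (hf.iterate_dslope hU (k + 1)).analyticAt hU
    have hw : h w = 0 := apply_eq_zero_of_analyticOrderAt_ne_zero fun h0 => by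
      rw [ih, h0, add_zero, Nat.cast_le] at hk
      omega
    have h_eq : h = (· - w) • dslope h w := funext fun z => (sub_smul_dslope_of_zero hw z).symm
    rw [ih, iterate_succ_apply', h_eq, analyticOrderAt_smul (by fun_prop) hd_an,
      analyticOrderAt_id_sub_const_self, Nat.cast_succ, add_assoc]

theorem iterate_dslope_apply_self_eq_zero (hf : DifferentiableOn ℂ f U) (hU : U ∈ 𝓝 w)
    {k : ℕ} (hk : k < analyticOrderAt f w) : (swap dslope w)^[k] f w = 0 := by
  refine apply_eq_zero_of_analyticOrderAt_ne_zero fun h0 => hk.ne ?_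
  rw [analyticOrderAt_eq_add_iterate_dslope hf hU hk.le, h0, add_zero]

theorem iterate_dslope_apply_self_ne_zero (hf : DifferentiableOn ℂ f U) (hU : U ∈ 𝓝 w)
    {k : ℕ} (hk : analyticOrderAt f w = k) : (swap dslope w)^[k] f w ≠ 0 := by
  have h := analyticOrderAt_eq_add_iterate_dslope hf hU hk.ge
  rw [hk] at h
  have h0 : analyticOrderAt ((swap dslope w)^[k] f) w = 0 :=
    ENat.add_left_injective_of_ne_top (ENat.natCast_ne_top k)
      (by simp only [add_comm _ (k : ℕ∞)]; exact h.symm)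
  exact (analyticOrderAt_eq_zero.1 h0).resolve_left
    (not_not.2 ((hf.iterate_dslope hU k).analyticAt hU))

theorem pow_mul_iterate_dslope (hf : DifferentiableOn ℂ f U) (hU : U ∈ 𝓝 w)
    {k : ℕ} (hk : k ≤ analyticOrderAt f w) (z : ℂ) :
    (z - w) ^ k * (swap dslope w)^[k] f z = f z :=
  pow_sub_smul_iterate_dslope_of_zero k
    (fun _ hj => iterate_dslope_apply_self_eq_zero hf hU ((Nat.cast_lt.2 hj).trans_le hk)) z

end IterateDSlope

namespace Complex

variable {E : Type*} [NormedAddCommGroup E] [NormedSpace ℂ E] [Nontrivial E]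

theorem le_norm_of_forall_mem_frontier_le_norm {f : E → ℂ} {U : Set E}
    (hU : Bornology.IsBounded U) (hd : DiffContOnCl ℂ f U) (hf : ∀ z ∈ closure U, f z ≠ 0)
    {C : ℝ} (hC : 0 < C) (hle : ∀ z ∈ frontier U, C ≤ ‖f z‖) {z : E} (hz : z ∈ closure U) :
    C ≤ ‖f z‖ := by
  have h := norm_le_of_forall_mem_frontier_norm_le hU (hd.inv hf) (C := C⁻¹)
    (fun z hz => by rw [Pi.inv_apply, norm_inv]; exact inv_anti₀ hC (hle z hz)) hz
  rw [Pi.inv_apply, norm_inv] at h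
  exact (inv_le_inv₀ (norm_pos_iff.2 (hf z hz)) hC).1 h

theorem apply_ne_zero_of_tendstoUniformlyOn_sphere {ι : Type*} {φ : Filter ι} [φ.NeBot]
    {h : ι → ℂ → ℂ} {H : ℂ → ℂ} {w : ℂ} {δ : ℝ} (hδ : 0 < δ)
    (hh : ∀ᶠ n in φ, DiffContOnCl ℂ (h n) (ball w δ) ∧ ∀ z ∈ closedBall w δ, h n z ≠ 0)
    (hH : DiffContOnCl ℂ H (ball w δ)) (hconv : TendstoUniformlyOn h H φ (sphere w δ))
    (hH0 : ∀ z ∈ sphere w δ, H z ≠ 0) : H w ≠ 0 := by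
  have hclosure : closure (ball w δ) = closedBall w δ := closure_ball w hδ.ne'
  have hfrontier : frontier (ball w δ) = sphere w δ := frontier_ball w hδ.ne'
  have hw : w ∈ closure (ball w δ) := hclosure ▸ mem_closedBall_self hδ.le
  obtain ⟨z₀, hz₀, hmin⟩ := (isCompact_sphere w δ).exists_isMinOn
    (NormedSpace.sphere_nonempty.2 hδ.le)
    ((hclosure ▸ hH.continuousOn).mono sphere_subset_closedBall).norm
  set ε := ‖H z₀‖
  have hε : 0 < ε := norm_pos_iff.2 (hH0 z₀ hz₀)
  obtain ⟨n, ⟨hhn, hhn0⟩, hn⟩ :=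
    (hh.and (Metric.tendstoUniformlyOn_iff.1 hconv (ε / 3) (by positivity))).exists
  have h_upper : ‖h n w - H w‖ ≤ ε / 3 :=
    norm_le_of_forall_mem_frontier_norm_le isBounded_ball (hhn.sub hH)
      (fun z hz => by
        rw [hfrontier] at hz
        rw [Pi.sub_apply, ← dist_eq_norm, dist_comm]
        exact (hn z hz).le) hw
  have h_lower : 2 * ε / 3 ≤ ‖h n w‖ :=
    le_norm_of_forall_mem_frontier_le_norm isBounded_ball hhn (hclosure ▸ hhn0)
      (by positivity) (fun z hz => by
        rw [hfrontier] at hz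
        have h1 : ε ≤ ‖H z‖ := hmin hz
        have h2 := hn z hz
        rw [dist_eq_norm] at h2
        linarith [norm_sub_norm_le (H z) (h n z)]) hw
  intro hHw
  rw [hHw, sub_zero] at h_upper
  linarith

end Complex

section LocallyUniformLimit

variable {ι : Type*} {φ : Filter ι} {U : Set ℂ}

theorem TendstoLocallyUniformlyOn.iteratedDeriv {E : Type*} [NormedAddCommGroup E]
    [NormedSpace ℂ E] [CompleteSpace E] {F : ι → ℂ → E} {f : ℂ → E}
    (hf : TendstoLocallyUniformlyOn F f φ U) (hF : ∀ᶠ n in φ, DifferentiableOn ℂ (F n) U)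
    (hU : IsOpen U) (k : ℕ) :
    TendstoLocallyUniformlyOn (fun n => iteratedDeriv k (F n)) (iteratedDeriv k f) φ U := by
  induction k generalizing F f with
  | zero => simpa only [iteratedDeriv_zero] using hf
  | succ k ih =>
    simp only [iteratedDeriv_succ']
    exact ih (hf.deriv hF hU) (hF.mono fun n hn => hn.deriv hU)

theorem le_analyticOrderAt_of_tendstoLocallyUniformlyOn [φ.NeBot] {g : ι → ℂ → ℂ} {G : ℂ → ℂ}
    (hU : IsOpen U) (hg : ∀ n, DifferentiableOn ℂ (g n) U)
    (hconv : TendstoLocallyUniformlyOn g G φ U) {w : ℂ} (hw : w ∈ U) {k : ℕ∞}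
    (hk : ∀ᶠ n in φ, k ≤ analyticOrderAt (g n) w) : k ≤ analyticOrderAt G w := by
  have hG : DifferentiableOn ℂ G U := hconv.differentiableOn (.of_forall hg) hU
  refine ENat.forall_natCast_le_iff_le.1 fun m hm => ?_
  rw [natCast_le_analyticOrderAt_iff_iteratedDeriv_eq_zero (hG.analyticAt (hU.mem_nhds hw))]
  intro j hj
  refine tendsto_nhds_unique ((hconv.iteratedDeriv (.of_forall hg) hU j).tendsto_at hw)
    (tendsto_const_nhds.congr' ?_)
  filter_upwards [hk] with n hn
  exact ((natCast_le_analyticOrderAt_iff_iteratedDeriv_eq_zero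
    ((hg n).analyticAt (hU.mem_nhds hw))).1 (hm.trans hn) j hj).symm

theorem tendstoUniformlyOn_sphere_of_pow_sub_mul {h : ι → ℂ → ℂ} {H : ℂ → ℂ} {g : ι → ℂ → ℂ}
    {G : ℂ → ℂ} {w : ℂ} {δ : ℝ} {k : ℕ} (hδ : 0 < δ)
    (hconv : TendstoUniformlyOn g G φ (sphere w δ))
    (hh : ∀ᶠ n in φ, ∀ z, (z - w) ^ k * h n z = g n z) (hH : ∀ z, (z - w) ^ k * H z = G z) :
    TendstoUniformlyOn h H φ (sphere w δ) := by
  rw [Metric.tendstoUniformlyOn_iff] at hconv ⊢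
  intro ε hε
  filter_upwards [hh, hconv (ε * δ ^ k) (by positivity)] with n hhn hn z hz
  have hnorm : ‖(z - w) ^ k‖ = δ ^ k := by rw [norm_pow, ← dist_eq_norm, mem_sphere.1 hz]
  have h1 : δ ^ k * dist (H z) (h n z) = dist (G z) (g n z) := by
    rw [← hnorm, dist_eq_norm, dist_eq_norm, ← norm_mul, mul_sub, hH, hhn]
  have h2 := hn z hz
  rw [← h1, mul_comm ε] at h2
  exact lt_of_mul_lt_mul_left h2 (by positivity)

end LocallyUniformLimit

section Hurwitz

variable {U : Set ℂ} {g : ℕ → ℂ → ℂ} {G : ℂ → ℂ} {w : ℂ}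

theorem analyticOrderAt_le_of_tendstoLocallyUniformlyOn (hU : IsOpen U)
    (hg : ∀ n, DifferentiableOn ℂ (g n) U) (hconv : TendstoLocallyUniformlyOn g G atTop U)
    (hw : w ∈ U) (hG : analyticOrderAt G w ≠ ⊤) {k : ℕ}
    (hk : ∀ᶠ n in atTop, analyticOrderAt (g n) w = k)
    (hzero : ∀ᶠ z in 𝓝[≠] w, ∀ n, g n z ≠ 0) : analyticOrderAt G w ≤ k := by
  by_contra! hlt
  have hUw : U ∈ 𝓝 w := hU.mem_nhds hw
  have hGd : DifferentiableOn ℂ G U := hconv.differentiableOn (.of_forall hg) hU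
  have hGiso : ∀ᶠ z in 𝓝[≠] w, G z ≠ 0 :=
    (hGd.analyticAt hUw).eventually_ne_zero_of_analyticOrderAt_ne_top hG
  obtain ⟨δ, hδ, hδU⟩ : ∃ δ > 0, closedBall w δ ⊆
      {z | z ∈ U ∧ (z ≠ w → G z ≠ 0 ∧ ∀ n, g n z ≠ 0)} := by
    refine nhds_basis_closedBall.mem_iff.1 ?_
    filter_upwards [hUw, eventually_nhdsWithin_iff.1 (hGiso.and hzero)] with z hz h
    exact ⟨hz, h⟩
  have hfac : ∀ᶠ n in atTop, ∀ z, (z - w) ^ k * (swap dslope w)^[k] (g n) z = g n z := by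
    filter_upwards [hk] with n hn using pow_mul_iterate_dslope (hg n) hUw hn.ge
  have hFac : ∀ z, (z - w) ^ k * (swap dslope w)^[k] G z = G z :=
    pow_mul_iterate_dslope hGd hUw hlt.le
  -- The quotients `g n / (z - w) ^ k` have no zeros on the closed ball, yet their limit
  -- `G / (z - w) ^ k` vanishes at `w`.
  refine Complex.apply_ne_zero_of_tendstoUniformlyOn_sphere hδ ?_
    ((hGd.iterate_dslope hUw k).diffContOnCl_ball fun z hz => (hδU hz).1)
    (tendstoUniformlyOn_sphere_of_pow_sub_mul hδ ((tendstoLocallyUniformlyOn_iff_forall_isCompact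
      hU).1 hconv _ (fun z hz => (hδU (sphere_subset_closedBall hz)).1) (isCompact_sphere w δ))
      hfac hFac) (fun z hz h0 => ?_) (iterate_dslope_apply_self_eq_zero hGd hUw hlt)
  · filter_upwards [hk, hfac] with n hn hfacn
    refine ⟨((hg n).iterate_dslope hUw k).diffContOnCl_ball fun z hz => (hδU hz).1,
      fun z hz h0 => ?_⟩
    rcases eq_or_ne z w with rfl | hzw
    · exact iterate_dslope_apply_self_ne_zero (hg n) hUw hn h0
    · exact ((hδU hz).2 hzw).2 n (by rw [← hfacn, h0, mul_zero])
  · exact ((hδU (sphere_subset_closedBall hz)).2 (ne_of_mem_sphere hz hδ.ne')).1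
      (by rw [← hFac, h0, mul_zero])

theorem eventually_analyticOrderAt_eq_of_tendstoLocallyUniformlyOn (hU : IsOpen U)
    (hg : ∀ n, DifferentiableOn ℂ (g n) U) (hconv : TendstoLocallyUniformlyOn g G atTop U)
    (hw : w ∈ U) (hG : analyticOrderAt G w ≠ ⊤)
    (hmono : Monotone fun n => analyticOrderAt (g n) w)
    (hzero : ∀ᶠ z in 𝓝[≠] w, ∀ n, g n z ≠ 0) :
    ∀ᶠ n in atTop, analyticOrderAt (g n) w = analyticOrderAt G w := by
  have hle : ∀ n, analyticOrderAt (g n) w ≤ analyticOrderAt G w := fun n =>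
    le_analyticOrderAt_of_tendstoLocallyUniformlyOn hU hg hconv hw
      (eventually_atTop.2 ⟨n, fun m hm => hmono hm⟩)
  obtain ⟨N, hN⟩ := ENat.exists_eq_iSup_of_lt_top ((iSup_le hle).trans_lt hG.lt_top)
  obtain ⟨k, hk⟩ := ENat.ne_top_iff_exists.1 (ne_top_of_le_ne_top hG (iSup_le hle))
  have hstab : ∀ᶠ n in atTop, analyticOrderAt (g n) w = k :=
    eventually_atTop.2 ⟨N, fun n hn =>
      hk ▸ le_antisymm (le_iSup (fun m => analyticOrderAt (g m) w) n) (hN ▸ hmono hn)⟩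
  have hGk : analyticOrderAt G w = k := le_antisymm
    (analyticOrderAt_le_of_tendstoLocallyUniformlyOn hU hg hconv hw hG hstab hzero)
    (hk ▸ iSup_le hle)
  exact hGk ▸ hstab

end Hurwitz

namespace Real

variable {ι : Type*} {f : ι → ℝ}

theorem multipliable_of_nonneg_of_le_one (h0 : ∀ i, 0 ≤ f i) (h1 : ∀ i, f i ≤ 1) :
    Multipliable f :=
  ⟨_, tendsto_atTop_ciInf (Finset.prod_anti_set_of_le_one h0 h1)
    ⟨0, by rintro _ ⟨s, rfl⟩; exact Finset.prod_nonneg fun i _ => h0 i⟩⟩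

theorem tprod_le_prod_of_nonneg_of_le_one (h0 : ∀ i, 0 ≤ f i) (h1 : ∀ i, f i ≤ 1)
    (s : Finset ι) : ∏' i, f i ≤ ∏ i ∈ s, f i :=
  (Finset.prod_anti_set_of_le_one h0 h1).le_of_tendsto
    (multipliable_of_nonneg_of_le_one h0 h1).hasProd s

theorem tendsto_tprod_of_le_of_tendsto {κ : Type*} {φ : Filter κ} [φ.NeBot]
    {a : κ → ι → ℝ} {b : ι → ℝ} (hb0 : ∀ i, 0 ≤ b i) (hle : ∀ n i, b i ≤ a n i)
    (ha1 : ∀ n i, a n i ≤ 1) (hlim : ∀ i, Tendsto (a · i) φ (𝓝 (b i))) :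
    Tendsto (fun n => ∏' i, a n i) φ (𝓝 (∏' i, b i)) := by
  have ha0 : ∀ n i, 0 ≤ a n i := fun n i => (hb0 i).trans (hle n i)
  have hb : Multipliable b :=
    multipliable_of_nonneg_of_le_one hb0 fun i => le_of_tendsto' (hlim i) (ha1 · i)
  refine tendsto_order.2 ⟨fun c hc => .of_forall fun n => hc.trans_le ?_, fun c hc => ?_⟩
  · exact le_of_tendsto_of_tendsto' hb.hasProd
      (multipliable_of_nonneg_of_le_one (ha0 n) (ha1 n)).hasProd
      fun s => Finset.prod_le_prod (fun i _ => hb0 i) fun i _ => hle n i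
  · obtain ⟨s, hs⟩ := (hb.hasProd.eventually (gt_mem_nhds hc)).exists
    filter_upwards [(tendsto_finsetProd s fun i _ => hlim i).eventually (gt_mem_nhds hs)]
      with n hn
    exact (tprod_le_prod_of_nonneg_of_le_one (ha0 n) (ha1 n) s).trans_lt hn

theorem tendsto_tprod_pow_of_le_of_eventually_eq {κ : Type*} {φ : Filter κ} [φ.NeBot]
    {e : κ → ι → ℕ} {e' : ι → ℕ} (h0 : ∀ i, 0 ≤ f i) (h1 : ∀ i, f i ≤ 1)
    (hle : ∀ n i, e n i ≤ e' i) (hev : ∀ i, ∀ᶠ n in φ, e n i = e' i) :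
    Tendsto (fun n => ∏' i, f i ^ e n i) φ (𝓝 (∏' i, f i ^ e' i)) :=
  tendsto_tprod_of_le_of_tendsto (fun i => pow_nonneg (h0 i) _)
    (fun n i => pow_le_pow_of_le_one (h0 i) (h1 i) (hle n i))
    (fun n i => pow_le_one₀ (h0 i) (h1 i))
    fun i => tendsto_const_nhds.congr' ((hev i).mono fun n hn => by simp only [hn])

end Real

section ForwardIterates

variable {f F : ℕ → ℂ → ℂ}

theorem IsHolSelfMap.analyticAt {g : ℂ → ℂ} (hg : IsHolSelfMap g) {z : ℂ} (hz : z ∈ unitDisk) :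
    AnalyticAt ℂ g z :=
  hg.1.analyticAt (isOpen_ball.mem_nhds hz)

theorem IsHolSelfMap.comp {g h : ℂ → ℂ} (hg : IsHolSelfMap g) (hh : IsHolSelfMap h) :
    IsHolSelfMap (g ∘ h) :=
  ⟨hg.1.comp hh.1 hh.2, hg.2.comp hh.2⟩

theorem isHolSelfMap_forwardIter (hf : ∀ n, IsHolSelfMap (f (n + 1))) (hF0 : ∀ z, F 0 z = z)
    (hFrec : ∀ n z, F (n + 1) z = f (n + 1) (F n z)) (n : ℕ) : IsHolSelfMap (F n) := by
  induction n with
  | zero => rw [funext hF0]; exact ⟨differentiableOn_id, mapsTo_id _⟩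
  | succ n ih => rw [show F (n + 1) = f (n + 1) ∘ F n from funext (hFrec n)]; exact (hf n).comp ih

theorem forwardIter_eq_of_le (hFrec : ∀ n z, F (n + 1) z = f (n + 1) (F n z)) {z c : ℂ}
    {n m : ℕ} (hnm : n ≤ m) (h : F n z = F n c) : F m z = F m c := by
  induction m, hnm using Nat.le_induction with
  | base => exact h
  | succ m _ ih => rw [hFrec, hFrec, ih]

theorem monotone_analyticOrderAt_forwardIter_sub (hf : ∀ n, IsHolSelfMap (f (n + 1)))
    (hF0 : ∀ z, F 0 z = z) (hFrec : ∀ n z, F (n + 1) z = f (n + 1) (F n z)) {c w : ℂ}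
    (hw : w ∈ unitDisk) : Monotone fun n => analyticOrderAt (fun z => F n z - F n c) w := by
  refine monotone_nat_of_le_succ fun n => ?_
  have hFn := isHolSelfMap_forwardIter hf hF0 hFrec n
  simp only [hFrec]
  exact analyticOrderAt_sub_le_comp_sub ((hf n).analyticAt (hFn.2 hw)) (hFn.analyticAt hw)

theorem toNat_ordAt_forwardIter_sub_le_and_eventually_eq (hf : ∀ n, IsHolSelfMap (f (n + 1)))
    (hF0 : ∀ z, F 0 z = z) (hFrec : ∀ n z, F (n + 1) z = f (n + 1) (F n z)) {Flim : ℂ → ℂ}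
    (hconv : TendstoLocallyUniformlyOn F Flim atTop unitDisk)
    (hnc : ∃ z ∈ unitDisk, ∃ w ∈ unitDisk, Flim z ≠ Flim w) {c w : ℂ} (hc : c ∈ unitDisk)
    (hw : w ∈ unitDisk) :
    (∀ n, (ordAt (fun z => F n z - F n c) w).toNat ≤ (ordAt (fun z => Flim z - Flim c) w).toNat) ∧
      ∀ᶠ n in atTop,
        (ordAt (fun z => F n z - F n c) w).toNat = (ordAt (fun z => Flim z - Flim c) w).toNat := by
  have hD : IsOpen unitDisk := isOpen_ball
  have hFn := isHolSelfMap_forwardIter hf hF0 hFrec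
  have hg : ∀ n, DifferentiableOn ℂ (fun z => F n z - F n c) unitDisk :=
    fun n => (hFn n).1.sub_const _
  have hconvg : TendstoLocallyUniformlyOn (fun n z => F n z - F n c) (fun z => Flim z - Flim c)
      atTop unitDisk :=
    hconv.fun_sub ((hconv.tendsto_at hc).tendstoUniformlyOn_const _).tendstoLocallyUniformlyOn
  have hG := (hconvg.differentiableOn (.of_forall hg) hD).analyticOnNhd hD
  have hGtop : analyticOrderAt (fun z => Flim z - Flim c) w ≠ ⊤ := by
    obtain ⟨z₁, hz₁, z₂, hz₂, hne⟩ := hnc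
    obtain ⟨z, hz, hGz⟩ : ∃ z ∈ unitDisk, Flim z - Flim c ≠ 0 := by
      by_contra! h
      exact hne (by rw [sub_eq_zero.1 (h z₁ hz₁), sub_eq_zero.1 (h z₂ hz₂)])
    refine hG.analyticOrderAt_ne_top_of_isPreconnected (convex_ball 0 1).isPreconnected hz hw ?_
    rw [analyticOrderAt_eq_zero (f := fun z => Flim z - Flim c) |>.2 (.inr hGz)]
    exact ENat.zero_ne_top
  have hzero : ∀ᶠ z in 𝓝[≠] w, ∀ n, F n z - F n c ≠ 0 := by
    filter_upwards [(hG w hw).eventually_ne_zero_of_analyticOrderAt_ne_top hGtop,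
      nhdsWithin_le_nhds (hD.mem_nhds hw)] with z hGz hz n hn
    refine hGz (sub_eq_zero.2 (tendsto_nhds_unique (hconv.tendsto_at hz)
      ((hconv.tendsto_at hc).congr' (eventually_atTop.2 ⟨n, fun m hm => ?_⟩))))
    exact (forwardIter_eq_of_le hFrec hm (sub_eq_zero.1 hn)).symm
  have hmono := monotone_analyticOrderAt_forwardIter_sub hf hF0 hFrec (c := c) hw
  simp only [ordAt_eq_analyticOrderAt ((hg _).analyticAt (hD.mem_nhds hw)),
    ordAt_eq_analyticOrderAt (hG w hw)]
  refine ⟨fun n => ENat.toNat_le_toNat ?_ hGtop, ?_⟩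
  · exact le_analyticOrderAt_of_tendstoLocallyUniformlyOn hD hg hconvg hw
      (eventually_atTop.2 ⟨n, fun m hm => hmono hm⟩)
  · filter_upwards [eventually_analyticOrderAt_eq_of_tendstoLocallyUniformlyOn hD hg hconvg hw
      hGtop hmono hzero] with n hn
    rw [hn]

end ForwardIterates

theorem stmt_8_general
    (f F : ℕ → ℂ → ℂ) (Flim : ℂ → ℂ) (c : ℂ)
    (hf : ∀ n : ℕ, IsHolSelfMap (f (n + 1)))
    (hF0 : ∀ z, F 0 z = z)
    (hFrec : ∀ n z, F (n + 1) z = f (n + 1) (F n z))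
    (hconv : TendstoLocallyUniformlyOn F Flim atTop unitDisk)
    (hnc : ∃ z ∈ unitDisk, ∃ w ∈ unitDisk, Flim z ≠ Flim w)
    (hc : c ∈ unitDisk) :
    (∀ n : ℕ, Multipliable (fun p : {w : ℂ // w ∈ unitDisk ∧ w ≠ 0} =>
        ‖p.1‖ ^ (ordAt (fun z => F (n + 1) z - F (n + 1) c) p.1).toNat)) ∧
    Multipliable (fun p : {w : ℂ // w ∈ unitDisk ∧ w ≠ 0} =>
        ‖p.1‖ ^ (ordAt (fun z => Flim z - Flim c) p.1).toNat) ∧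
    Tendsto (fun n : ℕ => ∏' p : {w : ℂ // w ∈ unitDisk ∧ w ≠ 0},
        ‖p.1‖ ^ (ordAt (fun z => F (n + 1) z - F (n + 1) c) p.1).toNat)
      atTop
      (nhds (∏' p : {w : ℂ // w ∈ unitDisk ∧ w ≠ 0},
        ‖p.1‖ ^ (ordAt (fun z => Flim z - Flim c) p.1).toNat)) := by
  have h0 : ∀ p : {w : ℂ // w ∈ unitDisk ∧ w ≠ 0}, 0 ≤ ‖p.1‖ := fun p => norm_nonneg _
  have h1 : ∀ p : {w : ℂ // w ∈ unitDisk ∧ w ≠ 0}, ‖p.1‖ ≤ 1 :=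
    fun p => (mem_ball_zero_iff.1 p.2.1).le
  have hmult : ∀ e : {w : ℂ // w ∈ unitDisk ∧ w ≠ 0} → ℕ, Multipliable fun p => ‖p.1‖ ^ e p :=
    fun e => Real.multipliable_of_nonneg_of_le_one (fun p => pow_nonneg (h0 p) _)
      fun p => pow_le_one₀ (h0 p) (h1 p)
  have hord := fun p : {w : ℂ // w ∈ unitDisk ∧ w ≠ 0} =>
    toNat_ordAt_forwardIter_sub_le_and_eventually_eq hf hF0 hFrec hconv hnc hc p.2.1
  exact ⟨fun n => hmult _, hmult _, Real.tendsto_tprod_pow_of_le_of_eventually_eq h0 h1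
    (fun n p => (hord p).1 (n + 1)) fun p => (tendsto_add_atTop_nat 1).eventually (hord p).2⟩

/-- With forward iterates `F n` converging locally uniformly to a
nonconstant holomorphic self-map `Flim`, for any `c` in the disk the Blaschke-type products
`∏_{w ∈ 𝔻, w ≠ 0} |w| ^ ord_w (F n - F n c)` all converge and tend, as `n → ∞`, to
`∏_{w ∈ 𝔻, w ≠ 0} |w| ^ ord_w (Flim - Flim c)`. -/
theorem stmt_8
    (f F : ℕ → ℂ → ℂ) (Flim : ℂ → ℂ) (c : ℂ)
    (hf : ∀ n : ℕ, IsHolSelfMap (f (n + 1)))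
    (hF0 : ∀ z, F 0 z = z)
    (hFrec : ∀ n z, F (n + 1) z = f (n + 1) (F n z))
    (hFlim : IsHolSelfMap Flim)
    (hconv : TendstoLocallyUniformlyOn F Flim atTop unitDisk)
    (hnc : ∃ z ∈ unitDisk, ∃ w ∈ unitDisk, Flim z ≠ Flim w)
    (hc : c ∈ unitDisk) :
    (∀ n : ℕ, Multipliable (fun p : {w : ℂ // w ∈ unitDisk ∧ w ≠ 0} =>
        ‖p.1‖ ^ (ordAt (fun z => F (n + 1) z - F (n + 1) c) p.1).toNat)) ∧
    Multipliable (fun p : {w : ℂ // w ∈ unitDisk ∧ w ≠ 0} =>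
        ‖p.1‖ ^ (ordAt (fun z => Flim z - Flim c) p.1).toNat) ∧
    Tendsto (fun n : ℕ => ∏' p : {w : ℂ // w ∈ unitDisk ∧ w ≠ 0},
        ‖p.1‖ ^ (ordAt (fun z => F (n + 1) z - F (n + 1) c) p.1).toNat)
      atTop
      (nhds (∏' p : {w : ℂ // w ∈ unitDisk ∧ w ≠ 0},
        ‖p.1‖ ^ (ordAt (fun z => Flim z - Flim c) p.1).toNat)) :=
  stmt_8_general f F Flim c hf hF0 hFrec hconv hnc hc
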